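/- arXiv:1910.02164 — 3 statements merged into one kernel-verified Lean document; each statement's English description precedes it below -/
import Mathlib

section
/- Let f: A* → ℝ ∪ {⊥} be a function computable both by a min-plus word automaton and by a max-plus word automaton. Then f is computable by an unambiguous tropical word automaton (a weighted automaton with at most one accepting run per input word). -/
/-- A word automaton with real weights on transitions and final states. -/
structure WWA (A : Type) (Q : Type) where
  init : Q → Prop
  trans : Q → A → Q → Prop
  wt : Q → A → Q → ℝ
  final : Q → Prop
  fwt : Q → ℝ

/-- A run of `M` over the word `w`: a sequence of states starting in an initial state and
following transitions. -/
def WIsRun {A Q : Type} (M : WWA A Q) (w : List A) (ρ : Fin (w.length + 1) → Q) : Prop :=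
  M.init (ρ 0) ∧ ∀ i : Fin w.length, M.trans (ρ i.castSucc) (w.get i) (ρ i.succ)

/-- An accepting run: a run ending in a final state. -/
def WIsAcc {A Q : Type} (M : WWA A Q) (w : List A) (ρ : Fin (w.length + 1) → Q) : Prop :=
  WIsRun M w ρ ∧ M.final (ρ (Fin.last w.length))

/-- The weight of a run: the sum of the weights of its transitions. -/
def WWt {A Q : Type} (M : WWA A Q) (w : List A) (ρ : Fin (w.length + 1) → Q) : ℝ :=
  ∑ i : Fin w.length, M.wt (ρ i.castSucc) (w.get i) (ρ i.succ)

/-- `x` is the weight of some accepting run of `M` over `w` (weight of the run plus the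
weight of the final state reached). -/
def WAccWeight {A Q : Type} (M : WWA A Q) (w : List A) (x : ℝ) : Prop :=
  ∃ ρ : Fin (w.length + 1) → Q,
    WIsAcc M w ρ ∧ WWt M w ρ + M.fwt (ρ (Fin.last w.length)) = x

/-- `f` is the max-plus semantics of `M`: `f w = ⊥` iff there is no accepting run over
`w`, and otherwise `f w` is the maximum weight of an accepting run. -/
def WComputesMax {A Q : Type} (M : WWA A Q) (f : List A → Option ℝ) : Prop :=
  ∀ w, (f w = none ↔ ¬ ∃ x, WAccWeight M w x) ∧
    ∀ x, f w = some x → WAccWeight M w x ∧ ∀ y, WAccWeight M w y → y ≤ x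

/-- `f` is the min-plus semantics of `M`. -/
def WComputesMin {A Q : Type} (M : WWA A Q) (f : List A → Option ℝ) : Prop :=
  ∀ w, (f w = none ↔ ¬ ∃ x, WAccWeight M w x) ∧
    ∀ x, f w = some x → WAccWeight M w x ∧ ∀ y, WAccWeight M w y → x ≤ y

/-- `M` is unambiguous: every word admits at most one accepting run. -/
def WUnambiguous {A Q : Type} (M : WWA A Q) : Prop :=
  ∀ (w : List A) (ρ ρ' : Fin (w.length + 1) → Q),
    WIsAcc M w ρ → WIsAcc M w ρ' → ρ = ρ'

/-!
Let `P` be the product of `Mmax` and `Mmin` weighted by the difference of the weights. A run of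
`Mmax` over `w` weighs at most `f w` and a run of `Mmin` at least `f w`, so every accepting run
of `P` has weight `≤ 0`, and pairing two optimal runs gives one of weight `0` for every `w` in
the domain of `f`. Keep only the transitions of `P` lying on accepting runs of weight `0`. The
prefix weight `c` with which such a run reaches a state is then unique (two values would combine
into an accepting run of positive weight), so `-c` is a potential and every accepting run of the
trimmed automaton has weight `0`. Weighted as in `Mmax`, all its accepting runs over `w` thus
weigh `f w`. Keeping only the lexicographically least accepting run, by remembering the set of
states reached by smaller runs, makes it unambiguous without changing these weights.
-/

theorem List.append_lt_append_iff_of_length_eq {α : Type*} [LT α] {t₁ t₂ u₁ u₂ : List α}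
    (h : t₁.length = t₂.length) : t₁ ++ u₁ < t₂ ++ u₂ ↔ t₁ < t₂ ∨ t₁ = t₂ ∧ u₁ < u₂ := by
  induction t₁ generalizing t₂ with
  | nil => cases t₂ <;> simp_all
  | cons a t₁ ih =>
    cases t₂ with
    | nil => simp at h
    | cons b t₂ =>
      simp only [List.cons_append, List.cons_lt_cons_iff, ih (by simpa using h), List.cons.injEq]
      tauto

namespace LombardyMairesse

variable {A T : Type}

/-- `Walk M q w s q' c`: a path of `M` from `q` to `q'` reading `w`, visiting the states `s`
(both ends included), of transition weight `c`. -/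
inductive Walk (M : WWA A T) : T → List A → List T → T → ℝ → Prop
  | nil (q : T) : Walk M q [] [q] q 0
  | cons {q q' q'' : T} {a : A} {w : List A} {s : List T} {c : ℝ} :
      M.trans q a q' → Walk M q' w s q'' c → Walk M q (a :: w) (q :: s) q'' (M.wt q a q' + c)

namespace Walk

variable {M : WWA A T}

theorem exists_eq_cons {q w s q' c} (h : Walk M q w s q' c) : ∃ t, s = q :: t := by
  cases h <;> exact ⟨_, rfl⟩

theorem length_eq {q w s q' c} (h : Walk M q w s q' c) : s.length = w.length + 1 := by
  induction h with
  | nil => rfl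
  | cons _ _ ih => simp [ih]

theorem unique {q w s q' c p p' c'} (h : Walk M q w s q' c) (h' : Walk M p w s p' c') :
    p = q ∧ p' = q' ∧ c' = c := by
  induction h generalizing p p' c' with
  | nil => cases h'; exact ⟨rfl, rfl, rfl⟩
  | cons _ hw ih =>
    cases h' with
    | cons _ hw' =>
      obtain ⟨rfl, rfl, rfl⟩ := ih hw'
      exact ⟨rfl, rfl, rfl⟩

theorem single {q a q'} (h : M.trans q a q') : Walk M q [a] [q, q'] q' (M.wt q a q') := by
  simpa using cons h (nil q')

theorem append {q u s q' c v s' q'' c'} (h : Walk M q u s q' c) (h' : Walk M q' v s' q'' c') :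
    Walk M q (u ++ v) (s ++ s'.tail) q'' (c + c') := by
  induction h with
  | nil =>
    obtain ⟨t, rfl⟩ := h'.exists_eq_cons
    simpa using h'
  | cons ht _ ih => simpa [add_assoc] using cons ht (ih h')

theorem snoc {q u s q' c a q''} (h : Walk M q u s q' c) (ht : M.trans q' a q'') :
    Walk M q (u ++ [a]) (s ++ [q'']) q'' (c + M.wt q' a q'') := by
  simpa using h.append (single ht)

theorem exists_of_snoc {q u a s q' c} (h : Walk M q (u ++ [a]) s q' c) :
    ∃ m t c₁, Walk M q u t m c₁ ∧ M.trans m a q' ∧ s = t ++ [q'] := by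
  induction u generalizing q s c with
  | nil =>
    cases h with
    | cons ht hw => cases hw; exact ⟨q, [q], 0, nil q, ht, rfl⟩
  | cons b u ih =>
    cases h with
    | cons ht hw =>
      obtain ⟨m, t, c₁, hw', ht', rfl⟩ := ih hw
      exact ⟨m, _ :: t, _, cons ht hw', ht', rfl⟩

theorem of_trans_imp {M' : WWA A T} (htr : ∀ q a q', M.trans q a q' → M'.trans q a q')
    {q w s q' c} (h : Walk M q w s q' c) : ∃ c', Walk M' q w s q' c' := by
  induction h with
  | nil => exact ⟨0, nil _⟩
  | cons ht _ ih =>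
    obtain ⟨c', hw⟩ := ih
    exact ⟨_, cons (htr _ _ _ ht) hw⟩

end Walk

theorem wWt_cons (M : WWA A T) (a : A) (w : List A) (ρ : Fin (w.length + 2) → T) :
    WWt M (a :: w) ρ = M.wt (ρ 0) a (ρ 1) + WWt M w (Fin.tail ρ) := by
  simp only [WWt, List.length_cons, Fin.sum_univ_succ]
  rfl

theorem walk_ofFn {M : WWA A T} {w : List A} (ρ : Fin (w.length + 1) → T)
    (h : ∀ i : Fin w.length, M.trans (ρ i.castSucc) (w.get i) (ρ i.succ)) :
    Walk M (ρ 0) w (List.ofFn ρ) (ρ (Fin.last w.length)) (WWt M w ρ) := by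
  induction w with
  | nil => simpa [WWt] using Walk.nil (M := M) (ρ 0)
  | cons a w ih =>
    rw [List.ofFn_succ, wWt_cons]
    exact Walk.cons (h 0) (ih (Fin.tail ρ) fun i => h i.succ)

theorem Walk.exists_run {M : WWA A T} {q w s q' c} (h : Walk M q w s q' c) :
    ∃ ρ : Fin (w.length + 1) → T, List.ofFn ρ = s ∧ ρ 0 = q ∧ ρ (Fin.last w.length) = q' ∧
      (∀ i : Fin w.length, M.trans (ρ i.castSucc) (w.get i) (ρ i.succ)) ∧ WWt M w ρ = c := by
  induction h with
  | nil q => exact ⟨fun _ => q, rfl, rfl, rfl, fun i => i.elim0, by simp [WWt]⟩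
  | @cons q q' q'' a w s c ht hw ih =>
    obtain ⟨ρ, rfl, h0, hl, htr, rfl⟩ := ih
    refine ⟨Fin.cons q ρ, List.ofFn_succ, rfl, hl, Fin.cases ?_ fun i => htr i, ?_⟩
    · rw [wWt_cons]; simp [h0]
    · simpa [h0] using ht

def Reaches (M : WWA A T) (w : List A) (s : List T) (q : T) (c : ℝ) : Prop :=
  ∃ q₀, M.init q₀ ∧ Walk M q₀ w s q c

def Accepts (M : WWA A T) (w : List A) (s : List T) (x : ℝ) : Prop :=
  ∃ q c, Reaches M w s q c ∧ M.final q ∧ x = c + M.fwt q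

theorem Reaches.snoc {M : WWA A T} {w s q c a q'} (h : Reaches M w s q c)
    (ht : M.trans q a q') : Reaches M (w ++ [a]) (s ++ [q']) q' (c + M.wt q a q') :=
  let ⟨q₀, hi, hw⟩ := h
  ⟨q₀, hi, hw.snoc ht⟩

theorem Reaches.length_eq {M : WWA A T} {w s q c} (h : Reaches M w s q c) :
    s.length = w.length + 1 :=
  let ⟨_, _, hw⟩ := h
  hw.length_eq

theorem Reaches.unique {M : WWA A T} {w s q c q' c'} (h : Reaches M w s q c)
    (h' : Reaches M w s q' c') : q' = q ∧ c' = c :=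
  let ⟨_, _, hw⟩ := h
  let ⟨_, _, hw'⟩ := h'
  (hw.unique hw').2

theorem Accepts.length_eq {M : WWA A T} {w s x} (h : Accepts M w s x) :
    s.length = w.length + 1 :=
  let ⟨_, _, hr, _⟩ := h
  hr.length_eq

theorem Accepts.unique {M : WWA A T} {w s x x'} (h : Accepts M w s x) (h' : Accepts M w s x') :
    x' = x := by
  obtain ⟨q, c, hr, -, rfl⟩ := h
  obtain ⟨q', c', hr', -, rfl⟩ := h'
  obtain ⟨rfl, rfl⟩ := hr.unique hr'
  rfl

theorem accepts_ofFn {M : WWA A T} {w : List A} {ρ : Fin (w.length + 1) → T}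
    (h : WIsAcc M w ρ) :
    Accepts M w (List.ofFn ρ) (WWt M w ρ + M.fwt (ρ (Fin.last w.length))) :=
  ⟨_, _, ⟨ρ 0, h.1.1, walk_ofFn ρ h.1.2⟩, h.2, rfl⟩

theorem wAccWeight_iff_exists_accepts {M : WWA A T} {w : List A} {x : ℝ} :
    WAccWeight M w x ↔ ∃ s, Accepts M w s x := by
  constructor
  · rintro ⟨ρ, hacc, rfl⟩
    exact ⟨_, accepts_ofFn hacc⟩
  · rintro ⟨s, q, c, ⟨q₀, hi, hw⟩, hf, rfl⟩
    obtain ⟨ρ, -, rfl, rfl, htr, rfl⟩ := hw.exists_run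
    exact ⟨ρ, ⟨⟨hi, htr⟩, hf⟩, rfl⟩

def WComputesFunctional (M : WWA A T) (f : List A → Option ℝ) : Prop :=
  ∀ w x, WAccWeight M w x ↔ f w = some x

namespace WComputesFunctional

variable {M : WWA A T} {f : List A → Option ℝ}

theorem of_accepts (hsound : ∀ w s x, Accepts M w s x → f w = some x)
    (hcomplete : ∀ w x, f w = some x → ∃ s y, Accepts M w s y) :
    WComputesFunctional M f := by
  intro w x
  rw [wAccWeight_iff_exists_accepts]
  refine ⟨fun ⟨s, hs⟩ => hsound w s x hs, fun hx => ?_⟩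
  obtain ⟨s, y, hs⟩ := hcomplete w x hx
  obtain rfl : y = x := Option.some_injective _ ((hsound w s y hs).symm.trans hx)
  exact ⟨s, hs⟩

theorem none_iff (h : WComputesFunctional M f) (w : List A) :
    f w = none ↔ ¬ ∃ x, WAccWeight M w x := by
  simp only [h w, Option.eq_none_iff_forall_ne_some, not_exists]

theorem eq_of_wAccWeight (h : WComputesFunctional M f) {w x y} (hx : f w = some x)
    (hy : WAccWeight M w y) : y = x :=
  Option.some_injective _ (((h w y).1 hy).symm.trans hx)

theorem computesMax (h : WComputesFunctional M f) : WComputesMax M f := fun w =>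
  ⟨h.none_iff w, fun _ hx => ⟨(h w _).2 hx, fun _ hy => (h.eq_of_wAccWeight hx hy).le⟩⟩

theorem computesMin (h : WComputesFunctional M f) : WComputesMin M f := fun w =>
  ⟨h.none_iff w, fun _ hx => ⟨(h w _).2 hx, fun _ hy => (h.eq_of_wAccWeight hx hy).ge⟩⟩

end WComputesFunctional

section Product

variable {Q₁ Q₂ : Type} {M₁ : WWA A Q₁} {M₂ : WWA A Q₂}

def diffProd (M₁ : WWA A Q₁) (M₂ : WWA A Q₂) : WWA A (Q₁ × Q₂) where
  init q := M₁.init q.1 ∧ M₂.init q.2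
  trans q a q' := M₁.trans q.1 a q'.1 ∧ M₂.trans q.2 a q'.2
  wt q a q' := M₁.wt q.1 a q'.1 - M₂.wt q.2 a q'.2
  final q := M₁.final q.1 ∧ M₂.final q.2
  fwt q := M₁.fwt q.1 - M₂.fwt q.2

theorem Walk.unzip {q w s q' c} (h : Walk (diffProd M₁ M₂) q w s q' c) :
    ∃ c₁ c₂, Walk M₁ q.1 w (s.map Prod.fst) q'.1 c₁ ∧
      Walk M₂ q.2 w (s.map Prod.snd) q'.2 c₂ ∧ c = c₁ - c₂ := by
  induction h with
  | nil => exact ⟨0, 0, .nil _, .nil _, by ring⟩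
  | cons ht _ ih =>
    obtain ⟨c₁, c₂, hw₁, hw₂, rfl⟩ := ih
    exact ⟨_, _, .cons ht.1 hw₁, .cons ht.2 hw₂, by simp only [diffProd]; ring⟩

theorem Walk.zip {p w s₁ p' c₁ r s₂ r' c₂} (h₁ : Walk M₁ p w s₁ p' c₁)
    (h₂ : Walk M₂ r w s₂ r' c₂) :
    Walk (diffProd M₁ M₂) (p, r) w (s₁.zip s₂) (p', r') (c₁ - c₂) := by
  induction h₁ generalizing r s₂ c₂ with
  | nil => cases h₂; simpa using Walk.nil (M := diffProd M₁ M₂) _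
  | cons ht _ ih =>
    cases h₂ with
    | cons ht₂ hw₂ =>
      convert Walk.cons (M := diffProd M₁ M₂) (q := (_, _)) (q' := (_, _)) ⟨ht, ht₂⟩ (ih hw₂)
        using 1
      · rfl
      · show _ - _ = _ - _ + _
        ring

theorem Accepts.unzip {w s x} (h : Accepts (diffProd M₁ M₂) w s x) :
    ∃ x₁ x₂, Accepts M₁ w (s.map Prod.fst) x₁ ∧ Accepts M₂ w (s.map Prod.snd) x₂ ∧
      x = x₁ - x₂ := by
  obtain ⟨q, c, ⟨q₀, hi, hw⟩, hf, rfl⟩ := h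
  obtain ⟨c₁, c₂, hw₁, hw₂, rfl⟩ := hw.unzip
  exact ⟨_, _, ⟨_, _, ⟨_, hi.1, hw₁⟩, hf.1, rfl⟩, ⟨_, _, ⟨_, hi.2, hw₂⟩, hf.2, rfl⟩,
    by simp only [diffProd]; ring⟩

theorem Accepts.zip {w s₁ x₁ s₂ x₂} (h₁ : Accepts M₁ w s₁ x₁) (h₂ : Accepts M₂ w s₂ x₂) :
    Accepts (diffProd M₁ M₂) w (s₁.zip s₂) (x₁ - x₂) := by
  obtain ⟨q₁, c₁, ⟨p₁, hi₁, hw₁⟩, hf₁, rfl⟩ := h₁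
  obtain ⟨q₂, c₂, ⟨p₂, hi₂, hw₂⟩, hf₂, rfl⟩ := h₂
  exact ⟨(q₁, q₂), _, ⟨(p₁, p₂), ⟨hi₁, hi₂⟩, hw₁.zip hw₂⟩, ⟨hf₁, hf₂⟩,
    by simp only [diffProd]; ring⟩

end Product

section Bounds

variable {M : WWA A T} {f : List A → Option ℝ} {w : List A} {s : List T} {x y : ℝ}

theorem WComputesMax.exists_eq_some (h : WComputesMax M f) (hs : Accepts M w s y) :
    ∃ x, f w = some x :=
  Option.ne_none_iff_exists'.1 fun hw =>
    (h w).1.1 hw ⟨y, wAccWeight_iff_exists_accepts.2 ⟨s, hs⟩⟩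

theorem WComputesMax.le (h : WComputesMax M f) (hx : f w = some x) (hs : Accepts M w s y) :
    y ≤ x :=
  ((h w).2 x hx).2 y (wAccWeight_iff_exists_accepts.2 ⟨s, hs⟩)

theorem WComputesMin.le (h : WComputesMin M f) (hx : f w = some x) (hs : Accepts M w s y) :
    x ≤ y :=
  ((h w).2 x hx).2 y (wAccWeight_iff_exists_accepts.2 ⟨s, hs⟩)

end Bounds

section MaxMin

variable {Q₁ Q₂ : Type} {Mmax : WWA A Q₁} {Mmin : WWA A Q₂} {f : List A → Option ℝ}
  (hmax : WComputesMax Mmax f) (hmin : WComputesMin Mmin f)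
include hmax hmin

theorem accepts_diffProd_nonpos {w s x} (h : Accepts (diffProd Mmax Mmin) w s x) : x ≤ 0 := by
  obtain ⟨x₁, x₂, h₁, h₂, rfl⟩ := h.unzip
  obtain ⟨v, hv⟩ := WComputesMax.exists_eq_some hmax h₁
  linarith [WComputesMax.le hmax hv h₁, WComputesMin.le hmin hv h₂]

theorem accepts_fst_of_accepts_diffProd_zero {w s v} (hv : f w = some v)
    (h : Accepts (diffProd Mmax Mmin) w s 0) : Accepts Mmax w (s.map Prod.fst) v := by
  obtain ⟨x₁, x₂, h₁, h₂, hx⟩ := h.unzip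
  obtain rfl : x₁ = v := by linarith [WComputesMax.le hmax hv h₁, WComputesMin.le hmin hv h₂]
  exact h₁

theorem exists_accepts_diffProd_zero {w v} (hv : f w = some v) :
    ∃ s, Accepts (diffProd Mmax Mmin) w s 0 := by
  obtain ⟨s₁, h₁⟩ := wAccWeight_iff_exists_accepts.1 ((hmax w).2 v hv).1
  obtain ⟨s₂, h₂⟩ := wAccWeight_iff_exists_accepts.1 ((hmin w).2 v hv).1
  exact ⟨_, sub_self v ▸ h₁.zip h₂⟩

end MaxMin

section Trim

variable {M : WWA A T}

def IsPrefixWeight (M : WWA A T) (q : T) (c : ℝ) : Prop :=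
  ∃ w s, Reaches M w s q c

def IsSuffixWeight (M : WWA A T) (q : T) (d : ℝ) : Prop :=
  ∃ w s q' c, Walk M q w s q' c ∧ M.final q' ∧ d = c + M.fwt q'

theorem IsPrefixWeight.of_init {q} (h : M.init q) : IsPrefixWeight M q 0 :=
  ⟨[], [q], q, h, .nil q⟩

theorem IsPrefixWeight.snoc {q c a q'} (h : IsPrefixWeight M q c) (ht : M.trans q a q') :
    IsPrefixWeight M q' (c + M.wt q a q') :=
  let ⟨_, _, hr⟩ := h
  ⟨_, _, hr.snoc ht⟩

theorem IsSuffixWeight.of_final {q} (h : M.final q) : IsSuffixWeight M q (M.fwt q) :=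
  ⟨[], [q], q, 0, .nil q, h, by ring⟩

theorem IsSuffixWeight.cons {q a q' d} (ht : M.trans q a q') (h : IsSuffixWeight M q' d) :
    IsSuffixWeight M q (M.wt q a q' + d) := by
  obtain ⟨w, s, qf, c, hw, hf, rfl⟩ := h
  exact ⟨_, _, qf, _, .cons ht hw, hf, by ring⟩

theorem IsPrefixWeight.exists_accepts {q c d} (h : IsPrefixWeight M q c)
    (h' : IsSuffixWeight M q d) : ∃ w s, Accepts M w s (c + d) := by
  obtain ⟨w, s, q₀, hi, hw⟩ := h
  obtain ⟨w', s', qf, c', hw', hf, rfl⟩ := h'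
  exact ⟨_, _, qf, _, ⟨q₀, hi, hw.append hw'⟩, hf, by ring⟩

/-- Keeps the transitions lying on an accepting run of weight `0`: some prefix weight `c` of the
source is completed, through the transition, by the suffix weight `-(c + wt)` of the target. -/
def trimZero (M : WWA A T) : WWA A T where
  init q := M.init q ∧ IsSuffixWeight M q 0
  trans q a q' := M.trans q a q' ∧
    ∃ c, IsPrefixWeight M q c ∧ IsSuffixWeight M q' (-(c + M.wt q a q'))
  wt := M.wt
  final q := M.final q ∧ IsPrefixWeight M q (-M.fwt q)
  fwt := M.fwt

theorem Walk.of_trimZero {q w s q' c} (h : Walk (trimZero M) q w s q' c) :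
    Walk M q w s q' c := by
  induction h with
  | nil => exact .nil _
  | cons ht _ ih => exact .cons ht.1 ih

theorem Walk.lift_trimZero {q w s qf d c} (hc : IsPrefixWeight M q c) (h : Walk M q w s qf d)
    (hf : M.final qf) (hzero : c + (d + M.fwt qf) = 0) : Walk (trimZero M) q w s qf d := by
  induction h generalizing c with
  | nil => exact .nil _
  | cons ht hw ih =>
    refine .cons ⟨ht, c, hc, ⟨_, _, _, _, hw, hf, by linarith⟩⟩ (ih (hc.snoc ht) hf ?_)
    linarith

section Nonpos

variable (hneg : ∀ w s x, Accepts M w s x → x ≤ 0)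
include hneg

theorem IsPrefixWeight.eq_of_isSuffixWeight_neg {q c₁ c₂} (h₁ : IsPrefixWeight M q c₁)
    (h₁' : IsSuffixWeight M q (-c₁)) (h₂ : IsPrefixWeight M q c₂)
    (h₂' : IsSuffixWeight M q (-c₂)) : c₁ = c₂ := by
  obtain ⟨w, s, h₁₂⟩ := h₁.exists_accepts h₂'
  obtain ⟨w', s', h₂₁⟩ := h₂.exists_accepts h₁'
  linarith [hneg _ _ _ h₁₂, hneg _ _ _ h₂₁]

theorem Walk.weight_of_trimZero {q w s qf d c} (h : Walk (trimZero M) q w s qf d)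
    (hc : IsPrefixWeight M q c) (hc' : IsSuffixWeight M q (-c)) (hf : (trimZero M).final qf) :
    c + (d + M.fwt qf) = 0 := by
  induction h generalizing c with
  | nil q =>
    have hq : IsSuffixWeight M q (-(-M.fwt q)) := (neg_neg (M.fwt q)).symm ▸ .of_final hf.1
    rw [hc.eq_of_isSuffixWeight_neg hneg hc' hf.2 hq]
    ring
  | @cons q q' _ a _ _ d' ht _ ih =>
    obtain ⟨htr, c', hpre, hsuf⟩ := ht
    have hsuf' : IsSuffixWeight M q (-c') := by
      simpa using hsuf.cons htr
    obtain rfl := hc.eq_of_isSuffixWeight_neg hneg hc' hpre hsuf'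
    have := ih (hc.snoc htr) hsuf hf
    change c + (M.wt q a q' + d' + M.fwt _) = 0
    linarith

theorem accepts_trimZero_iff {w s x} :
    Accepts (trimZero M) w s x ↔ Accepts M w s 0 ∧ x = 0 := by
  constructor
  · rintro ⟨q, c, ⟨q₀, hi, hw⟩, hf, rfl⟩
    have hzero : 0 + (c + M.fwt q) = 0 :=
      hw.weight_of_trimZero hneg (.of_init hi.1) (by simpa using hi.2) hf
    refine ⟨⟨q, c, ⟨q₀, hi.1, hw.of_trimZero⟩, hf.1, by linarith⟩, ?_⟩
    show c + M.fwt q = 0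
    linarith
  · rintro ⟨⟨q, c, ⟨q₀, hi, hw⟩, hf, hzero⟩, rfl⟩
    refine ⟨q, c, ⟨q₀, ⟨hi, ⟨_, _, q, c, hw, hf, hzero⟩⟩, ?_⟩, ⟨hf, ?_⟩, hzero⟩
    · exact hw.lift_trimZero (.of_init hi) hf (by linarith)
    · rw [show -M.fwt q = c by linarith]
      exact ⟨_, _, q₀, hi, hw⟩

end Nonpos

end Trim

section ZeroRuns

variable {Q₁ Q₂ : Type} {Mmax : WWA A Q₁} {Mmin : WWA A Q₂} {f : List A → Option ℝ}

/-- The runs of `Mmax × Mmin` pairing a run of `Mmax` and a run of `Mmin` of the same weight,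
weighted as in `Mmax`. -/
def zeroRunsMax (Mmax : WWA A Q₁) (Mmin : WWA A Q₂) : WWA A (Q₁ × Q₂) :=
  { trimZero (diffProd Mmax Mmin) with
    wt := fun q a q' => Mmax.wt q.1 a q'.1
    fwt := fun q => Mmax.fwt q.1 }

theorem Walk.fst_of_zeroRunsMax {q w s q' c} (h : Walk (zeroRunsMax Mmax Mmin) q w s q' c) :
    Walk Mmax q.1 w (s.map Prod.fst) q'.1 c := by
  induction h with
  | nil => exact .nil _
  | cons ht _ ih => exact .cons ht.1.1 ih

theorem computesFunctional_zeroRunsMax (hmax : WComputesMax Mmax f)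
    (hmin : WComputesMin Mmin f) : WComputesFunctional (zeroRunsMax Mmax Mmin) f := by
  have hneg : ∀ w s x, Accepts (diffProd Mmax Mmin) w s x → x ≤ 0 :=
    fun _ _ _ => accepts_diffProd_nonpos hmax hmin
  refine .of_accepts (fun w s x hs => ?_) (fun w v hv => ?_)
  · obtain ⟨q, c, ⟨q₀, hi, hw⟩, hf, rfl⟩ := hs
    obtain ⟨c', hw'⟩ := hw.of_trans_imp (M := zeroRunsMax Mmax Mmin)
      (M' := trimZero (diffProd Mmax Mmin)) fun _ _ _ h => h
    have hP := ((accepts_trimZero_iff hneg).1 ⟨q, c', ⟨q₀, hi, hw'⟩, hf, rfl⟩).1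
    obtain ⟨x₁, -, h₁, -⟩ := hP.unzip
    obtain ⟨v, hv⟩ := WComputesMax.exists_eq_some hmax h₁
    have hmaxRun : Accepts Mmax w (s.map Prod.fst) (c + Mmax.fwt q.1) :=
      ⟨q.1, c, ⟨q₀.1, hi.1.1, hw.fst_of_zeroRunsMax⟩, hf.1.1, rfl⟩
    rw [hv, ← (accepts_fst_of_accepts_diffProd_zero hmax hmin hv hP).unique hmaxRun]
    rfl
  · obtain ⟨s, hP⟩ := exists_accepts_diffProd_zero hmax hmin hv
    obtain ⟨q, c, ⟨q₀, hi, hw⟩, hf, -⟩ := (accepts_trimZero_iff hneg).2 ⟨hP, rfl⟩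
    obtain ⟨c', hw'⟩ := hw.of_trans_imp (M := trimZero (diffProd Mmax Mmin))
      (M' := zeroRunsMax Mmax Mmin) fun _ _ _ h => h
    exact ⟨s, _, q, c', ⟨q₀, hi, hw'⟩, hf, rfl⟩

end ZeroRuns

section Disamb

variable [LinearOrder T] {Z : WWA A T}

/-- Keeps, for every word, only the lexicographically least accepting run of `Z`. The second
component of a state is the set of states reached by the initial runs smaller than the run
followed so far (`smallerEnds`), and the run is accepting iff none of these can be accepted. -/
def disamb (Z : WWA A T) : WWA A (T × Set T) where
  init u := Z.init u.1 ∧ u.2 = {p | Z.init p ∧ p < u.1}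
  trans u a u' := Z.trans u.1 a u'.1 ∧
    u'.2 = {p' | (∃ p ∈ u.2, Z.trans p a p') ∨ (Z.trans u.1 a p' ∧ p' < u'.1)}
  wt u a u' := Z.wt u.1 a u'.1
  final u := Z.final u.1 ∧ ∀ p ∈ u.2, ¬ Z.final p
  fwt u := Z.fwt u.1

def smallerEnds (Z : WWA A T) (v : List A) (t : List T) : Set T :=
  {p | ∃ t' c, Reaches Z v t' p c ∧ t' < t}

theorem smallerEnds_nil (q : T) : smallerEnds Z [] [q] = {p | Z.init p ∧ p < q} := by
  ext p
  constructor
  · rintro ⟨t, c, ⟨q₀, hi, hw⟩, hlt⟩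
    cases hw
    exact ⟨hi, by simpa [List.cons_lt_cons_iff] using hlt⟩
  · rintro ⟨hi, hlt⟩
    exact ⟨[p], 0, ⟨p, hi, .nil p⟩, by simpa [List.cons_lt_cons_iff] using hlt⟩

theorem smallerEnds_snoc {v t q c} (h : Reaches Z v t q c) (a : A) (p₁ : T) :
    smallerEnds Z (v ++ [a]) (t ++ [p₁]) =
      {p' | (∃ p ∈ smallerEnds Z v t, Z.trans p a p') ∨ (Z.trans q a p' ∧ p' < p₁)} := by
  ext p'
  constructor
  · rintro ⟨t', c', ⟨q₀, hi, hw⟩, hlt⟩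
    obtain ⟨m, t₁, c₁, hw₁, htr, rfl⟩ := hw.exists_of_snoc
    have hr₁ : Reaches Z v t₁ m c₁ := ⟨q₀, hi, hw₁⟩
    rw [List.append_lt_append_iff_of_length_eq (hr₁.length_eq.trans h.length_eq.symm)] at hlt
    rcases hlt with hlt | ⟨rfl, hlt⟩
    · exact .inl ⟨m, ⟨t₁, c₁, hr₁, hlt⟩, htr⟩
    · obtain ⟨rfl, -⟩ := h.unique hr₁
      exact .inr ⟨htr, by simpa [List.cons_lt_cons_iff] using hlt⟩
  · rintro (⟨p, ⟨t', c', hr, hlt⟩, htr⟩ | ⟨htr, hlt⟩)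
    · refine ⟨t' ++ [p'], _, hr.snoc htr, ?_⟩
      rw [List.append_lt_append_iff_of_length_eq (hr.length_eq.trans h.length_eq.symm)]
      exact .inl hlt
    · refine ⟨t ++ [p'], _, h.snoc htr, List.append_left_lt ?_⟩
      simpa [List.cons_lt_cons_iff] using hlt

theorem Walk.fst_of_disamb {u w σ u' c} (h : Walk (disamb Z) u w σ u' c) {v t c₀}
    (hr : Reaches Z v t u.1 c₀) (hu : u.2 = smallerEnds Z v t) :
    Walk Z u.1 w (σ.map Prod.fst) u'.1 c ∧
      u'.2 = smallerEnds Z (v ++ w) (t ++ (σ.map Prod.fst).tail) := by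
  induction h generalizing v t c₀ with
  | nil => exact ⟨.nil _, by simpa using hu⟩
  | @cons u u₁ _ a _ _ _ ht hw ih =>
    obtain ⟨htr, hS⟩ := ht
    obtain ⟨hw', hend⟩ := ih (hr.snoc htr) (by rw [hS, hu, smallerEnds_snoc hr])
    obtain ⟨σ, rfl⟩ := hw.exists_eq_cons
    refine ⟨.cons htr hw', ?_⟩
    simpa using hend

theorem Walk.lift_disamb {q w s q' c} (h : Walk Z q w s q' c) {v t c₀}
    (hr : Reaches Z v t q c₀) :
    ∃ σ, Walk (disamb Z) (q, smallerEnds Z v t) w σ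
      (q', smallerEnds Z (v ++ w) (t ++ s.tail)) c ∧ σ.map Prod.fst = s := by
  induction h generalizing v t c₀ with
  | nil q => exact ⟨_, by simpa using Walk.nil (M := disamb Z) (q, smallerEnds Z v t), rfl⟩
  | @cons q q₁ _ a w _ _ ht hw ih =>
    obtain ⟨σ, hσ, rfl⟩ := ih (hr.snoc ht)
    obtain ⟨t', ht'⟩ := hw.exists_eq_cons
    refine ⟨_, .cons (q' := (q₁, smallerEnds Z (v ++ [a]) (t ++ [q₁])))
      ⟨ht, smallerEnds_snoc hr a q₁⟩ ?_, rfl⟩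
    convert hσ using 2
    simp [ht']

theorem Walk.eq_of_disamb {u w σ u' c σ' u'' c'} (h : Walk (disamb Z) u w σ u' c)
    (h' : Walk (disamb Z) u w σ' u'' c') (hσ : σ.map Prod.fst = σ'.map Prod.fst) : σ = σ' := by
  induction h generalizing σ' u'' c' with
  | nil => cases h'; rfl
  | cons ht hw ih =>
    cases h' with
    | cons ht' hw' =>
      obtain ⟨τ, rfl⟩ := hw.exists_eq_cons
      obtain ⟨τ', rfl⟩ := hw'.exists_eq_cons
      simp only [List.map_cons, List.cons.injEq] at hσ
      obtain rfl : _ = _ := Prod.ext hσ.2.1 (by rw [ht.2, ht'.2, hσ.2.1])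
      rw [ih hw' (by simp [hσ.2.2])]

theorem Accepts.of_disamb {w σ x} (h : Accepts (disamb Z) w σ x) :
    Accepts Z w (σ.map Prod.fst) x ∧ ∀ s' x', Accepts Z w s' x' → ¬ s' < σ.map Prod.fst := by
  obtain ⟨u', c, ⟨u, hi, hw⟩, hf, rfl⟩ := h
  obtain ⟨hw', hend⟩ := hw.fst_of_disamb (v := []) (t := [u.1]) ⟨u.1, hi.1, .nil _⟩
    (by rw [smallerEnds_nil]; exact hi.2)
  obtain ⟨σ, rfl⟩ := hw.exists_eq_cons
  refine ⟨⟨u'.1, c, ⟨u.1, hi.1, hw'⟩, hf.1, rfl⟩, ?_⟩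
  rintro s' x' ⟨q', c', hr', hf', -⟩ hlt
  exact hf.2 q' (hend ▸ ⟨s', c', hr', by simpa using hlt⟩) hf'

theorem exists_accepts_disamb {w s x} (h : Accepts Z w s x)
    (hmin : ∀ s' x', Accepts Z w s' x' → ¬ s' < s) : ∃ σ, Accepts (disamb Z) w σ x := by
  obtain ⟨q', c, ⟨q, hi, hw⟩, hf, rfl⟩ := h
  obtain ⟨σ, hσ, -⟩ := hw.lift_disamb (v := []) (t := [q]) ⟨q, hi, .nil q⟩
  obtain ⟨t, rfl⟩ := hw.exists_eq_cons
  refine ⟨σ, _, c, ⟨_, ⟨hi, smallerEnds_nil q⟩, hσ⟩, ⟨hf, ?_⟩, rfl⟩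
  rintro p ⟨t', c', hr, hlt⟩ hp
  exact hmin t' _ ⟨p, c', hr, hp, rfl⟩ (by simpa using hlt)

theorem Accepts.eq_of_disamb {w σ σ' x x'} (h : Accepts (disamb Z) w σ x)
    (h' : Accepts (disamb Z) w σ' x') : σ = σ' := by
  obtain ⟨hZ, hmin⟩ := h.of_disamb
  obtain ⟨hZ', hmin'⟩ := h'.of_disamb
  have hσ : σ.map Prod.fst = σ'.map Prod.fst := by
    rcases lt_trichotomy (σ.map Prod.fst) (σ'.map Prod.fst) with hlt | heq | hlt
    · exact absurd hlt (hmin' _ _ hZ)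
    · exact heq
    · exact absurd hlt (hmin _ _ hZ')
  obtain ⟨_, _, ⟨u, hi, hw⟩, -⟩ := h
  obtain ⟨_, _, ⟨u', hi', hw'⟩, -⟩ := h'
  obtain ⟨τ, rfl⟩ := hw.exists_eq_cons
  obtain ⟨τ', rfl⟩ := hw'.exists_eq_cons
  simp only [List.map_cons, List.cons.injEq] at hσ
  obtain rfl : u = u' := Prod.ext hσ.1 (by rw [hi.2, hi'.2, hσ.1])
  exact hw.eq_of_disamb hw' (by simp [hσ.2])

theorem disamb_unambiguous : WUnambiguous (disamb Z) := fun _ _ _ h h' =>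
  List.ofFn_injective ((accepts_ofFn h).eq_of_disamb (accepts_ofFn h'))

theorem WComputesFunctional.disamb [Finite T] {f : List A → Option ℝ}
    (h : WComputesFunctional Z f) : WComputesFunctional (disamb Z) f := by
  refine .of_accepts (fun w σ x hσ => (h w x).1 ?_) (fun w v hv => ?_)
  · exact wAccWeight_iff_exists_accepts.2 ⟨_, hσ.of_disamb.1⟩
  · obtain ⟨s, hs⟩ := wAccWeight_iff_exists_accepts.1 ((h w v).2 hv)
    have hfin : {s | ∃ x, Accepts Z w s x}.Finite :=
      (List.finite_length_eq T (w.length + 1)).subset fun _ ⟨_, hs⟩ => hs.length_eq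
    obtain ⟨s₀, ⟨x₀, hs₀⟩, hmin⟩ := Set.exists_min_image _ id hfin ⟨s, v, hs⟩
    obtain ⟨σ, hσ⟩ :=
      exists_accepts_disamb hs₀ fun s' x' hs' => not_lt.2 (hmin s' ⟨x', hs'⟩)
    exact ⟨σ, x₀, hσ⟩

end Disamb

end LombardyMairesse

theorem lombardy_mairesse_general {A : Type} {Q1 Q2 : Type} [Fintype Q1] [Fintype Q2]
    (Mmax : WWA A Q1) (Mmin : WWA A Q2) (f : List A → Option ℝ)
    (hmax : WComputesMax Mmax f) (hmin : WComputesMin Mmin f) :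
    ∃ (Q : Type) (_ : Fintype Q) (M : WWA A Q),
      WUnambiguous M ∧ WComputesMax M f ∧ WComputesMin M f := by
  classical
  let _ : LinearOrder (Q1 × Q2) := .lift' _ (Fintype.equivFin (Q1 × Q2)).injective
  have hf := (LombardyMairesse.computesFunctional_zeroRunsMax hmax hmin).disamb
  exact ⟨_, inferInstance, _, LombardyMairesse.disamb_unambiguous, hf.computesMax,
    hf.computesMin⟩

/-- Lombardy–Mairesse: a function `f : A* → ℝ ∪ {⊥}` computable both by
a min-plus and by a max-plus word automaton is computable by an unambiguous tropical word
automaton. -/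
theorem lombardy_mairesse {A : Type} [Fintype A] {Q1 Q2 : Type} [Fintype Q1] [Fintype Q2]
    (Mmax : WWA A Q1) (Mmin : WWA A Q2) (f : List A → Option ℝ)
    (hmax : WComputesMax Mmax f) (hmin : WComputesMin Mmin f) :
    ∃ (Q : Type) (_ : Fintype Q) (M : WWA A Q),
      WUnambiguous M ∧ WComputesMax M f ∧ WComputesMin M f :=
  lombardy_mairesse_general Mmax Mmin f hmax hmin
end

section
/- Suppose t refines s for P with shift x, i.e., Reach(s) = Reach(t), every run of the max-plus automaton over s to a state p ∈ P has a corresponding run over t to p of weight at least weight(run over s) − x, and every run of the min-plus automaton over s to a state q ∈ P has a corresponding run over t to q of weight at most weight(run over s) − x. Then for every context c with Prod(c) = P (assuming ⟦A_max⟧ ≤ ⟦A_min⟧ globally): ⟦A_max⟧(c∘s) ≤ ⟦A_max⟧(c∘t) + x ≤ ⟦A_min⟧(c∘t) + x ≤ ⟦A_min⟧(c∘s). -/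
/-- A ranked alphabet: symbols with arities. -/
structure RankedAlphabet where
  symb : Type
  ar : symb → ℕ

/-- Terms (finite ranked trees) over a ranked alphabet. -/
inductive Term (A : RankedAlphabet) : Type where
  | node (a : A.symb) (ts : Fin (A.ar a) → Term A) : Term A

/-- Height of a term: length of the longest branch. -/
def Term.height {A : RankedAlphabet} : Term A → ℕ
  | .node _ ts => Finset.univ.sup fun i => (ts i).height + 1

/-- Size of a term: number of nodes. -/
def Term.size {A : RankedAlphabet} : Term A → ℕ
  | .node _ ts => 1 + ∑ i, (ts i).size

/-- A nondeterministic tree automaton with real weights on transitions and final states. -/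
structure WTA (A : RankedAlphabet) (Q : Type) where
  trans : (a : A.symb) → (Fin (A.ar a) → Q) → Q → Prop
  wt : (a : A.symb) → (Fin (A.ar a) → Q) → Q → ℝ
  final : Q → Prop
  fwt : Q → ℝ

/-- Runs of an automaton over a term, reaching a given state at the root. -/
inductive RunOf {A : RankedAlphabet} {Q : Type} (M : WTA A Q) : Term A → Q → Type where
  | node (a : A.symb) (ts : Fin (A.ar a) → Term A) (qs : Fin (A.ar a) → Q) (q : Q)
      (hq : M.trans a qs q) (rs : ∀ i, RunOf M (ts i) (qs i)) : RunOf M (.node a ts) q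

/-- The weight of a run: sum of the weights of the transitions used. -/
def RunOf.wt {A : RankedAlphabet} {Q : Type} {M : WTA A Q} :
    {t : Term A} → {q : Q} → RunOf M t q → ℝ
  | _, _, .node a _ qs q _ rs => (∑ i, (rs i).wt) + M.wt a qs q

/-- Contexts: terms with exactly one hole. -/
inductive Ctx (A : RankedAlphabet) : Type where
  | hole : Ctx A
  | node (a : A.symb) (i : Fin (A.ar a)) (c : Ctx A) (ts : Fin (A.ar a) → Term A) : Ctx A

/-- Plugging a term into the hole of a context. -/
def Ctx.plug {A : RankedAlphabet} : Ctx A → Term A → Term A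
  | .hole, t => t
  | .node a i c ts, t => .node a (Function.update ts i (c.plug t))

/-- Composition of contexts: plugging the second context into the hole of the first. -/
def Ctx.comp {A : RankedAlphabet} : Ctx A → Ctx A → Ctx A
  | .hole, d => d
  | .node a i c ts, d => .node a i (c.comp d) ts

/-- Iterated composition of a context with itself. -/
def Ctx.pow {A : RankedAlphabet} (m : Ctx A) : ℕ → Ctx A
  | 0 => .hole
  | n + 1 => m.comp (m.pow n)

/-- Runs over a context, from a state (at the hole) to a state (at the root). -/
inductive CRun {A : RankedAlphabet} {Q : Type} (M : WTA A Q) : Ctx A → Q → Q → Type where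
  | hole (p : Q) : CRun M .hole p p
  | node (a : A.symb) (i : Fin (A.ar a)) (c : Ctx A) (ts : Fin (A.ar a) → Term A)
      (qs : Fin (A.ar a) → Q) (p q : Q)
      (hq : M.trans a qs q)
      (hc : CRun M c p (qs i))
      (rs : ∀ j, j ≠ i → RunOf M (ts j) (qs j)) : CRun M (.node a i c ts) p q

/-- The weight of a run over a context. -/
def CRun.wt {A : RankedAlphabet} {Q : Type} {M : WTA A Q} :
    {c : Ctx A} → {p q : Q} → CRun M c p q → ℝ
  | _, _, _, .hole _ => 0
  | _, _, _, .node a i _ _ qs _ q _ hc rs =>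
      (∑ j : {j // j ≠ i}, (rs j.1 j.2).wt) + M.wt a qs q + hc.wt

/-- Gluing a run over a context with a run over a term yields a run over the plugged term. -/
def CRun.glue {A : RankedAlphabet} {Q : Type} {M : WTA A Q} {t : Term A} :
    {c : Ctx A} → {p q : Q} → CRun M c p q → RunOf M t p → RunOf M (c.plug t) q
  | _, _, _, .hole _, r => r
  | _, _, _, .node a i c ts qs _ q hq hc rs, r =>
      .node a (Function.update ts i (c.plug t)) qs q hq
        (fun j =>
          if h : j = i then
            cast (by subst h; rw [Function.update_self]) (CRun.glue hc r)
          else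
            cast (congrArg (fun s => RunOf M s (qs j))
              (Function.update_of_ne h (c.plug t) ts).symm) (rs j h))

/-- Gluing runs over composed contexts. -/
def CRun.cglue {A : RankedAlphabet} {Q : Type} {M : WTA A Q} {d : Ctx A} {p : Q} :
    {c : Ctx A} → {q r : Q} → CRun M c q r → CRun M d p q → CRun M (c.comp d) p r
  | _, _, _, .hole _, rd => rd
  | _, _, _, .node a i c ts qs _ r hq hc rs, rd =>
      .node a i (c.comp d) ts qs p r hq (hc.cglue rd) rs

/-- The `n`-fold iteration of a loop run over a context. -/
def CRun.pow {A : RankedAlphabet} {Q : Type} {M : WTA A Q} {m : Ctx A} {q : Q}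
    (σ : CRun M m q q) : (n : ℕ) → CRun M (m.pow n) q q
  | 0 => .hole q
  | n + 1 => σ.cglue (σ.pow n)

/-- `x` is the weight of some accepting run of `M` over `t`
(weight of the run plus the final-state weight). -/
def AccWeight {A : RankedAlphabet} {Q : Type} (M : WTA A Q) (t : Term A) (x : ℝ) : Prop :=
  ∃ (q : Q) (r : RunOf M t q), M.final q ∧ r.wt + M.fwt q = x

/-- `M` has some accepting run over `t`. -/
def HasAcc {A : RankedAlphabet} {Q : Type} (M : WTA A Q) (t : Term A) : Prop :=
  ∃ x, AccWeight M t x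

/-- `f` is the max-plus semantics of `M`: `f t = ⊥` iff there is no accepting run,
and otherwise `f t` is the maximum weight of an accepting run. -/
def ComputesMax {A : RankedAlphabet} {Q : Type} (M : WTA A Q) (f : Term A → Option ℝ) : Prop :=
  ∀ t, (f t = none ↔ ¬ HasAcc M t) ∧
    ∀ x, f t = some x → AccWeight M t x ∧ ∀ y, AccWeight M t y → y ≤ x

/-- `f` is the min-plus semantics of `M`. -/
def ComputesMin {A : RankedAlphabet} {Q : Type} (M : WTA A Q) (f : Term A → Option ℝ) : Prop :=
  ∀ t, (f t = none ↔ ¬ HasAcc M t) ∧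
    ∀ x, f t = some x → AccWeight M t x ∧ ∀ y, AccWeight M t y → x ≤ y

/-- An automaton is unambiguous if every term has at most one accepting run. -/
def Unambiguous {A : RankedAlphabet} {Q : Type} (M : WTA A Q) : Prop :=
  ∀ (t : Term A) (q q' : Q) (r : RunOf M t q) (r' : RunOf M t q'),
    M.final q → M.final q' → q = q' ∧ HEq r r'

/-- The order on `ℝ ∪ {⊥}` in which `⊥` is comparable only with itself. -/
def OLe : Option ℝ → Option ℝ → Prop
  | none, none => True
  | some x, some y => x ≤ y
  | _, _ => False

/-- Shifting a value of `ℝ ∪ {⊥}` by a real number. -/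
def oshift (u : Option ℝ) (x : ℝ) : Option ℝ := u.map (· + x)

/-- The set of states reachable at the root by some run over `t`. -/
def reachSet {A : RankedAlphabet} {Q : Type} (M : WTA A Q) (t : Term A) : Set Q :=
  {q | Nonempty (RunOf M t q)}

/-- The set of states at the hole from which there is an accepting run over the context `c`. -/
def prodSet {A : RankedAlphabet} {Q : Type} (M : WTA A Q) (c : Ctx A) : Set Q :=
  {p | ∃ q, M.final q ∧ Nonempty (CRun M c p q)}

section Bi
variable {A : RankedAlphabet} {Q1 Q2 : Type} (M1 : WTA A Q1) (M2 : WTA A Q2)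

/-- Reachable states of the disjoint union of the two automata. -/
def biReach (t : Term A) : Set (Q1 ⊕ Q2) :=
  Sum.inl '' reachSet M1 t ∪ Sum.inr '' reachSet M2 t

/-- Productive states of the disjoint union of the two automata. -/
def biProd (c : Ctx A) : Set (Q1 ⊕ Q2) :=
  Sum.inl '' prodSet M1 c ∪ Sum.inr '' prodSet M2 c

/-- Final states of the disjoint union of the two automata. -/
def biFinal : Set (Q1 ⊕ Q2) :=
  Sum.inl '' {q | M1.final q} ∪ Sum.inr '' {q | M2.final q}

/-- Transition relation of the disjoint union of the two automata. -/
def biTrans (a : A.symb) (qs : Fin (A.ar a) → Q1 ⊕ Q2) (q : Q1 ⊕ Q2) : Prop :=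
  (∃ (qs' : Fin (A.ar a) → Q1) (q' : Q1),
      qs = Sum.inl ∘ qs' ∧ q = Sum.inl q' ∧ M1.trans a qs' q') ∨
  (∃ (qs' : Fin (A.ar a) → Q2) (q' : Q2),
      qs = Sum.inr ∘ qs' ∧ q = Sum.inr q' ∧ M2.trans a qs' q')

/-- The family `Reachable` of sets of states of the form `Reach(t)`. -/
def ReachableSets : Set (Set (Q1 ⊕ Q2)) := {S | ∃ t, biReach M1 M2 t = S}

/-- The family `Productive` of sets of states of the form `Prod(c)`. -/
def ProductiveSets : Set (Set (Q1 ⊕ Q2)) := {S | ∃ c, biProd M1 M2 c = S}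

/-- `t` refines `s` for `P` with shift `x`. -/
def Refines (P : Set (Q1 ⊕ Q2)) (t s : Term A) (x : ℝ) : Prop :=
  biReach M1 M2 s = biReach M1 M2 t ∧
  (∀ p : Q1, Sum.inl p ∈ P → ∀ ρ : RunOf M1 s p, ∃ ρ' : RunOf M1 t p, ρ.wt ≤ ρ'.wt + x) ∧
  (∀ q : Q2, Sum.inr q ∈ P → ∀ τ : RunOf M2 s q, ∃ τ' : RunOf M2 t q, τ'.wt + x ≤ τ.wt)

end Bi

/-- Transitions of the product automaton `A_pro`, relative to a transition relation `Δ`. -/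
def ProTrans {A : RankedAlphabet} {Q : Type}
    (Δ : ∀ a : A.symb, (Fin (A.ar a) → Q) → Q → Prop) (a : A.symb)
    (RPs : Fin (A.ar a) → Set Q × Set Q) (RP : Set Q × Set Q) : Prop :=
  RP.1 = {r | ∃ rs, Δ a rs r ∧ ∀ j, rs j ∈ (RPs j).1} ∧
  ∀ i, (RPs i).2 =
    {ri | ∃ rs p, Δ a rs p ∧ rs i = ri ∧ (∀ j, j ≠ i → rs j ∈ (RPs j).1) ∧ p ∈ RP.2}

/-!
An accepting run over `c∘s` splits at the hole into a run over `c` from a state `p ∈ Prod(c) = P`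
and a run over `s` reaching `p`. Replacing the latter by the run over `t` that refinement provides
moves the weight by at most `x` in the direction favourable to the max-plus (resp. min-plus)
semantics, and yields an accepting run over `c∘t`. If `c∘s` has no accepting run, neither has
`c∘t`, because every state reachable by `t` is reachable by `s`.
-/

section Runs
variable {A : RankedAlphabet} {Q : Type} {M : WTA A Q}

theorem RunOf.wt_cast {t t' : Term A} {q : Q} (h : t = t')
    (e : RunOf M t q = RunOf M t' q) (r : RunOf M t q) :
    (cast e r).wt = r.wt := by
  subst h; rfl

theorem CRun.wt_glue {t : Term A} {c : Ctx A} {p q : Q} (σ : CRun M c p q) (r : RunOf M t p) :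
    (σ.glue r).wt = σ.wt + r.wt := by
  induction σ with
  | hole p => exact (zero_add _).symm
  | node a i c ts qs p q hq hc rs ih =>
    simp only [CRun.glue, RunOf.wt, CRun.wt, Fintype.sum_eq_add_sum_subtype_ne _ i, dif_pos,
      RunOf.wt_cast (Function.update_self i (c.plug t) ts).symm, ih]
    rw [Finset.sum_congr rfl fun j _ => by rw [dif_neg j.2,
      RunOf.wt_cast (Function.update_of_ne j.2 (c.plug t) ts).symm]]
    ring

theorem RunOf.exists_split_of_plug {u : Term A} (c : Ctx A) {q : Q} (r : RunOf M (c.plug u) q) :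
    ∃ p, ∃ σ : CRun M c p q, ∃ ρ : RunOf M u p, r.wt = σ.wt + ρ.wt := by
  induction c generalizing q with
  | hole => exact ⟨q, .hole q, r, (zero_add _).symm⟩
  | node a i c ts ih =>
    cases r with
    | node _ _ qs q hq rs =>
      have e : Function.update ts i (c.plug u) i = c.plug u := Function.update_self ..
      obtain ⟨p, σ', ρ, hwt⟩ := ih (cast (congrArg (fun s => RunOf M s (qs i)) e) (rs i))
      rw [wt_cast e] at hwt
      refine ⟨p, .node a i c ts qs p q hq σ'
        (fun j hj => cast (congrArg (fun s => RunOf M s (qs j))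
          (Function.update_of_ne hj (c.plug u) ts)) (rs j)), ρ, ?_⟩
      have hsib : ∀ j : {j // j ≠ i}, (cast (congrArg (fun s => RunOf M s (qs j))
          (Function.update_of_ne j.2 (c.plug u) ts)) (rs j)).wt = (rs j).wt :=
        fun j => wt_cast (Function.update_of_ne j.2 (c.plug u) ts) _ _
      simp only [RunOf.wt, CRun.wt, Fintype.sum_eq_add_sum_subtype_ne _ i, hwt, hsib]
      ring

theorem hasAcc_plug_of_reachSet_subset {u v : Term A} (h : reachSet M u ⊆ reachSet M v)
    (c : Ctx A) (hu : HasAcc M (c.plug u)) : HasAcc M (c.plug v) := by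
  obtain ⟨-, q, r, hq, -⟩ := hu
  obtain ⟨p, σ, ρ, -⟩ := RunOf.exists_split_of_plug c r
  obtain ⟨ρ'⟩ := h ⟨ρ⟩
  exact ⟨_, q, σ.glue ρ', hq, rfl⟩

theorem AccWeight.exists_plug_of_runs {R : ℝ → ℝ → Prop} (hR : ∀ a b e, R a b → R (a + e) (b + e))
    {c : Ctx A} {s t : Term A}
    (hruns : ∀ p ∈ prodSet M c, ∀ ρ : RunOf M s p, ∃ ρ' : RunOf M t p, R ρ.wt ρ'.wt)
    {y : ℝ} (hy : AccWeight M (c.plug s) y) : ∃ y', AccWeight M (c.plug t) y' ∧ R y y' := by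
  obtain ⟨q, r, hq, rfl⟩ := hy
  obtain ⟨p, σ, ρ, hr⟩ := RunOf.exists_split_of_plug c r
  obtain ⟨ρ', hρ'⟩ := hruns p ⟨q, hq, ⟨σ⟩⟩ ρ
  refine ⟨_, ⟨q, σ.glue ρ', hq, rfl⟩, ?_⟩
  rw [hr, CRun.wt_glue, add_comm σ.wt, add_comm σ.wt, add_assoc, add_assoc]
  exact hR _ _ _ hρ'

theorem ComputesMax.ole_plug_oshift {f : Term A → Option ℝ} (hf : ComputesMax M f)
    {c : Ctx A} {s t : Term A} {x : ℝ} (hreach : reachSet M t ⊆ reachSet M s)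
    (hruns : ∀ p ∈ prodSet M c, ∀ ρ : RunOf M s p, ∃ ρ' : RunOf M t p, ρ.wt ≤ ρ'.wt + x) :
    OLe (f (c.plug s)) (oshift (f (c.plug t)) x) := by
  cases hfs : f (c.plug s) with
  | none =>
    have hft : f (c.plug t) = none :=
      (hf _).1.2 fun ht => (hf _).1.1 hfs (hasAcc_plug_of_reachSet_subset hreach c ht)
    simp [hft, oshift, OLe]
  | some y =>
    obtain ⟨y', hy', hyy'⟩ :=
      AccWeight.exists_plug_of_runs (R := fun a b => a ≤ b + x) (fun a b e h => by linarith) hruns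
        ((hf _).2 y hfs).1
    cases hft : f (c.plug t) with
    | none => exact absurd ⟨y', hy'⟩ ((hf _).1.1 hft)
    | some z => exact hyy'.trans (by simpa using ((hf _).2 z hft).2 y' hy')

theorem ComputesMin.oshift_ole_plug {g : Term A → Option ℝ} (hg : ComputesMin M g)
    {c : Ctx A} {s t : Term A} {x : ℝ} (hreach : reachSet M t ⊆ reachSet M s)
    (hruns : ∀ q ∈ prodSet M c, ∀ τ : RunOf M s q, ∃ τ' : RunOf M t q, τ'.wt + x ≤ τ.wt) :
    OLe (oshift (g (c.plug t)) x) (g (c.plug s)) := by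
  cases hgs : g (c.plug s) with
  | none =>
    have hgt : g (c.plug t) = none :=
      (hg _).1.2 fun ht => (hg _).1.1 hgs (hasAcc_plug_of_reachSet_subset hreach c ht)
    simp [hgt, oshift, OLe]
  | some y =>
    obtain ⟨y', hy', hyy'⟩ :=
      AccWeight.exists_plug_of_runs (R := fun a b => b + x ≤ a) (fun a b e h => by linarith) hruns
        ((hg _).2 y hgs).1
    cases hgt : g (c.plug t) with
    | none => exact absurd ⟨y', hy'⟩ ((hg _).1.1 hgt)
    | some z => exact (add_le_add_left (((hg _).2 z hgt).2 y' hy') x).trans hyy'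

end Runs

theorem OLe.oshift {u v : Option ℝ} (h : OLe u v) (x : ℝ) : OLe (oshift u x) (oshift v x) := by
  cases u <;> cases v <;> simp_all [OLe, _root_.oshift]

theorem reachSet_eq_of_biReach_eq {A : RankedAlphabet} {Q1 Q2 : Type} {M1 : WTA A Q1}
    {M2 : WTA A Q2} {s t : Term A} (h : biReach M1 M2 s = biReach M1 M2 t) :
    reachSet M1 s = reachSet M1 t ∧ reachSet M2 s = reachSet M2 t := by
  constructor <;> ext q
  · simpa [biReach] using Set.ext_iff.mp h (Sum.inl q)
  · simpa [biReach] using Set.ext_iff.mp h (Sum.inr q)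

theorem refines_shift_separates_general {A : RankedAlphabet} {Q1 Q2 : Type}
    (Mmax : WTA A Q1) (Mmin : WTA A Q2)
    (f g : Term A → Option ℝ)
    (hf : ComputesMax Mmax f) (hg : ComputesMin Mmin g)
    (hle : ∀ u, OLe (f u) (g u))
    (P : Set (Q1 ⊕ Q2)) (s t : Term A) (x : ℝ)
    (href : Refines Mmax Mmin P t s x)
    (c : Ctx A) (hc : biProd Mmax Mmin c = P) :
    OLe (f (c.plug s)) (oshift (f (c.plug t)) x) ∧
    OLe (oshift (f (c.plug t)) x) (oshift (g (c.plug t)) x) ∧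
    OLe (oshift (g (c.plug t)) x) (g (c.plug s)) := by
  obtain ⟨hreach, hmax, hmin⟩ := href
  obtain ⟨hreach_max, hreach_min⟩ := reachSet_eq_of_biReach_eq hreach
  subst hc
  exact ⟨hf.ole_plug_oshift hreach_max.ge fun p hp => hmax p (Or.inl ⟨p, hp, rfl⟩),
    (hle _).oshift x,
    hg.oshift_ole_plug hreach_min.ge fun q hq => hmin q (Or.inr ⟨q, hq, rfl⟩)⟩

/-- if `t` refines `s` for `P` with shift `x`, and `c` is a context with
`Prod(c) = P`, then (assuming `⟦A_max⟧ ≤ ⟦A_min⟧` globally)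
`⟦A_max⟧(c∘s) ≤ ⟦A_max⟧(c∘t) + x ≤ ⟦A_min⟧(c∘t) + x ≤ ⟦A_min⟧(c∘s)`. -/
theorem refines_shift_separates {A : RankedAlphabet} {Q1 Q2 : Type}
    [Fintype Q1] [Fintype Q2] (Mmax : WTA A Q1) (Mmin : WTA A Q2)
    (f g : Term A → Option ℝ)
    (hf : ComputesMax Mmax f) (hg : ComputesMin Mmin g)
    (hle : ∀ u, OLe (f u) (g u))
    (P : Set (Q1 ⊕ Q2)) (s t : Term A) (x : ℝ)
    (href : Refines Mmax Mmin P t s x)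
    (c : Ctx A) (hc : biProd Mmax Mmin c = P) :
    OLe (f (c.plug s)) (oshift (f (c.plug t)) x) ∧
    OLe (oshift (f (c.plug t)) x) (oshift (g (c.plug t)) x) ∧
    OLe (oshift (g (c.plug t)) x) (g (c.plug s)) :=
  refines_shift_separates_general Mmax Mmin f g hf hg hle P s t x href c hc
end

section
/- Refinement with shift is a congruence for term construction: let ((R_0,P_0),…,(R_{n-1},P_{n-1}),a,(R,P)) be a transition of the product automaton A_pro (so that p_i ∈ P_i whenever there is a transition (p_0,…,p_{n-1},a,p) of the underlying automaton with p ∈ P and p_j ∈ R_j for j ≠ i), and for each i let t_i, s_i be terms with Reach(t_i) = R_i and t_i refines s_i for P_i with shift x_i. Then a(t_0,…,t_{n-1}) refines a(s_0,…,s_{n-1}) for P with shift x_0 + ⋯ + x_{n-1}. -/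
/-!
Reachability of `a(t_0,…,t_{n-1})` depends only on the sets `Reach(t_i)`, so it is a congruence.
For the weights, a run over `a(s_0,…,s_{n-1})` ending in `p ∈ P` uses some transition
`(q_0,…,q_{n-1},a,p)`; the `A_pro` transition forces `q_i ∈ P_i`, since the other children
`q_j` are reachable from `s_j`, hence from `t_j`. Each child run can therefore be replaced by a
dominating run over `t_i` at cost `x_i`, and the shifts add up along the root transition.
-/

section Congruence

variable {A : RankedAlphabet}

theorem reachSet_node {Q : Type} (M : WTA A Q) (a : A.symb) (t : Fin (A.ar a) → Term A) :
    reachSet M (.node a t) = {q | ∃ qs, M.trans a qs q ∧ ∀ i, qs i ∈ reachSet M (t i)} := by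
  ext q
  constructor
  · rintro ⟨⟨_, _, qs, _, hq, rs⟩⟩
    exact ⟨qs, hq, fun i => ⟨rs i⟩⟩
  · rintro ⟨qs, hq, hrs⟩
    exact ⟨.node a t qs q hq fun i => (hrs i).some⟩

theorem reachSet_node_congr {Q : Type} (M : WTA A Q) {a : A.symb} {s t : Fin (A.ar a) → Term A}
    (h : ∀ i, reachSet M (s i) = reachSet M (t i)) :
    reachSet M (.node a s) = reachSet M (.node a t) := by
  simp only [reachSet_node, h]

section Bi

variable {Q1 Q2 : Type} (M1 : WTA A Q1) (M2 : WTA A Q2)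

@[simp]
theorem preimage_inl_biReach (t : Term A) : Sum.inl ⁻¹' biReach M1 M2 t = reachSet M1 t := by
  simp [biReach, Set.preimage_union, Set.preimage_image_eq _ Sum.inl_injective]

@[simp]
theorem preimage_inr_biReach (t : Term A) : Sum.inr ⁻¹' biReach M1 M2 t = reachSet M2 t := by
  simp [biReach, Set.preimage_union, Set.preimage_image_eq _ Sum.inr_injective]

theorem biReach_node_congr {a : A.symb} {s t : Fin (A.ar a) → Term A}
    (h : ∀ i, biReach M1 M2 (s i) = biReach M1 M2 (t i)) :
    biReach M1 M2 (.node a s) = biReach M1 M2 (.node a t) := by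
  have h1 i : reachSet M1 (s i) = reachSet M1 (t i) := by
    rw [← preimage_inl_biReach M1 M2, h, preimage_inl_biReach]
  have h2 i : reachSet M2 (s i) = reachSet M2 (t i) := by
    rw [← preimage_inr_biReach M1 M2, h, preimage_inr_biReach]
  simp only [biReach, reachSet_node_congr M1 h1, reachSet_node_congr M2 h2]

theorem biTrans_inl {a : A.symb} {qs : Fin (A.ar a) → Q1} {p : Q1} (h : M1.trans a qs p) :
    biTrans M1 M2 a (Sum.inl ∘ qs) (Sum.inl p) :=
  Or.inl ⟨qs, p, rfl, rfl, h⟩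

theorem biTrans_inr {a : A.symb} {qs : Fin (A.ar a) → Q2} {p : Q2} (h : M2.trans a qs p) :
    biTrans M1 M2 a (Sum.inr ∘ qs) (Sum.inr p) :=
  Or.inr ⟨qs, p, rfl, rfl, h⟩

end Bi

theorem ProTrans.mem_snd {Q : Type} {Δ : ∀ a : A.symb, (Fin (A.ar a) → Q) → Q → Prop}
    {a : A.symb} {RPs : Fin (A.ar a) → Set Q × Set Q} {RP : Set Q × Set Q}
    (hpro : ProTrans Δ a RPs RP) {rs : Fin (A.ar a) → Q} {p : Q} (hΔ : Δ a rs p)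
    (hp : p ∈ RP.2) (i : Fin (A.ar a)) (hrs : ∀ j, j ≠ i → rs j ∈ (RPs j).1) :
    rs i ∈ (RPs i).2 := by
  rw [hpro.2 i]
  exact ⟨rs, p, hΔ, rfl, hrs, hp⟩

section Runs

variable {Q : Type} {M : WTA A Q} {a : A.symb} {s t : Fin (A.ar a) → Term A}
  {qs : Fin (A.ar a) → Q} {p : Q} {x : Fin (A.ar a) → ℝ}

theorem exists_run_node_wt_le_add (hq : M.trans a qs p) (rs : ∀ i, RunOf M (s i) (qs i))
    (h : ∀ i, ∃ ρ : RunOf M (t i) (qs i), (rs i).wt ≤ ρ.wt + x i) :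
    ∃ ρ : RunOf M (.node a t) p, (RunOf.node a s qs p hq rs).wt ≤ ρ.wt + ∑ i, x i := by
  choose ρs hρs using h
  refine ⟨.node a t qs p hq ρs, ?_⟩
  have := Finset.sum_le_sum fun i (_ : i ∈ Finset.univ) => hρs i
  simp only [RunOf.wt, Finset.sum_add_distrib] at this ⊢
  linarith

theorem exists_run_node_add_le_wt (hq : M.trans a qs p) (rs : ∀ i, RunOf M (s i) (qs i))
    (h : ∀ i, ∃ ρ : RunOf M (t i) (qs i), ρ.wt + x i ≤ (rs i).wt) :
    ∃ ρ : RunOf M (.node a t) p, ρ.wt + ∑ i, x i ≤ (RunOf.node a s qs p hq rs).wt := by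
  choose ρs hρs using h
  refine ⟨.node a t qs p hq ρs, ?_⟩
  have := Finset.sum_le_sum fun i (_ : i ∈ Finset.univ) => hρs i
  simp only [RunOf.wt, Finset.sum_add_distrib] at this ⊢
  linarith

end Runs

end Congruence

theorem refines_congruence_general {A : RankedAlphabet} {Q1 Q2 : Type}
    (Mmax : WTA A Q1) (Mmin : WTA A Q2)
    (a : A.symb) (Rs Ps : Fin (A.ar a) → Set (Q1 ⊕ Q2)) (R P : Set (Q1 ⊕ Q2))
    (hpro : ProTrans (biTrans Mmax Mmin) a (fun i => (Rs i, Ps i)) (R, P))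
    (t s : Fin (A.ar a) → Term A) (x : Fin (A.ar a) → ℝ)
    (hreach : ∀ i, biReach Mmax Mmin (t i) = Rs i)
    (href : ∀ i, Refines Mmax Mmin (Ps i) (t i) (s i) (x i)) :
    Refines Mmax Mmin P (.node a t) (.node a s) (∑ i, x i) := by
  have hRs i : Rs i = biReach Mmax Mmin (s i) := by rw [← hreach i, (href i).1]
  refine ⟨biReach_node_congr Mmax Mmin fun i => (href i).1, ?_, ?_⟩
  · rintro p hp ⟨_, _, qs, _, hδ, rs⟩
    have hPs i : Sum.inl (qs i) ∈ Ps i := hpro.mem_snd (biTrans_inl Mmax Mmin hδ) hp i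
      fun j _ => by rw [hRs j]; exact Set.mem_union_left _ ⟨qs j, ⟨rs j⟩, rfl⟩
    exact exists_run_node_wt_le_add hδ rs fun i => (href i).2.1 _ (hPs i) (rs i)
  · rintro p hp ⟨_, _, qs, _, hδ, rs⟩
    have hPs i : Sum.inr (qs i) ∈ Ps i := hpro.mem_snd (biTrans_inr Mmax Mmin hδ) hp i
      fun j _ => by rw [hRs j]; exact Set.mem_union_right _ ⟨qs j, ⟨rs j⟩, rfl⟩
    exact exists_run_node_add_le_wt hδ rs fun i => (href i).2.2 _ (hPs i) (rs i)

/-- refinement with shift is a congruence: if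
`((R_0,P_0),…,(R_{n-1},P_{n-1}),a,(R,P))` is a transition of the product automaton
`A_pro`, `Reach(t_i) = R_i`, and `t_i` refines `s_i` for `P_i` with shift `x_i`, then
`a(t_0,…,t_{n-1})` refines `a(s_0,…,s_{n-1})` for `P` with shift `x_0 + ⋯ + x_{n-1}`. -/
theorem refines_congruence {A : RankedAlphabet} {Q1 Q2 : Type}
    (Mmax : WTA A Q1) (Mmin : WTA A Q2)
    (a : A.symb) (Rs Ps : Fin (A.ar a) → Set (Q1 ⊕ Q2)) (R P : Set (Q1 ⊕ Q2))
    (hR : R ∈ ReachableSets Mmax Mmin) (hP : P ∈ ProductiveSets Mmax Mmin)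
    (hRs : ∀ i, Rs i ∈ ReachableSets Mmax Mmin)
    (hPs : ∀ i, Ps i ∈ ProductiveSets Mmax Mmin)
    (hpro : ProTrans (biTrans Mmax Mmin) a (fun i => (Rs i, Ps i)) (R, P))
    (t s : Fin (A.ar a) → Term A) (x : Fin (A.ar a) → ℝ)
    (hreach : ∀ i, biReach Mmax Mmin (t i) = Rs i)
    (href : ∀ i, Refines Mmax Mmin (Ps i) (t i) (s i) (x i)) :
    Refines Mmax Mmin P (.node a t) (.node a s) (∑ i, x i) :=
  refines_congruence_general Mmax Mmin a Rs Ps R P hpro t s x hreach href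
end
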